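/- For all q ≥ 1 and all λ, λ' ∈ (0,1), the Bernoulli convolutions satisfy W_q(μ_λ, μ_{λ'}) ≤ (2/(1−λ))·|λ − λ'|. In particular, λ ↦ μ_λ is Lipschitz in the metric W_q on each interval [0, 1−ε] with ε > 0. -/

import Mathlib

open MeasureTheory ENNReal NNReal Set Metric Filter Topology

noncomputable section

/-- `γ` is a coupling of `μ₀` and `μ₁`. -/
def IsCoupling {α β : Type*} [MeasurableSpace α] [MeasurableSpace β]
    (γ : Measure (α × β)) (μ₀ : Measure α) (μ₁ : Measure β) : Prop :=
  γ.map Prod.fst = μ₀ ∧ γ.map Prod.snd = μ₁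

/-- The optimal transportation cost of exponent `q`. -/
def wCost {X : Type*} [MetricSpace X] [MeasurableSpace X]
    (q : ℝ) (μ₀ μ₁ : Measure X) : ℝ≥0∞ :=
  ⨅ (γ : Measure (X × X)) (_ : IsCoupling γ μ₀ μ₁),
    ∫⁻ p, ENNReal.ofReal (dist p.1 p.2 ^ q) ∂γ

/-- The Wasserstein distance of exponent `q`: `W_q = C_q^{min(1,1/q)}`. -/
def wDist {X : Type*} [MetricSpace X] [MeasurableSpace X]
    (q : ℝ) (μ₀ μ₁ : Measure X) : ℝ≥0∞ :=
  wCost q μ₀ μ₁ ^ min 1 (1 / q)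

/-- The `q`-th moment of a measure `μ` with respect to the base point `x₀`. -/
def moment {X : Type*} [MetricSpace X] [MeasurableSpace X]
    (q : ℝ) (x₀ : X) (μ : Measure X) : ℝ≥0∞ :=
  ∫⁻ x, ENNReal.ofReal (dist x x₀ ^ q) ∂μ


/-- `μ` is the Bernoulli convolution of parameter `l`: the stationary probability
measure of the IFS `{x ↦ lx, x ↦ lx + (1-l)}` with probabilities `(1/2, 1/2)`. -/
def BernoulliStationary (l : ℝ) (μ : Measure ℝ) : Prop :=
  IsProbabilityMeasure μ ∧
    μ = (1/2 : ℝ≥0∞) • μ.map (fun x => l * x)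
        + (1/2 : ℝ≥0∞) • μ.map (fun x => l * x + (1 - l))

/-!
Couple `μ_λ` and `μ_λ'` synchronously: start from the product coupling and repeatedly push it
forward by applying the same digit map to both coordinates, `φ_i^λ × φ_i^λ'`, averaging over `i`.
Stationarity preserves the marginals, and since both measures live on `[0, 1]`,
`|φ_i^λ x - φ_i^λ' y| ≤ λ |x - y| + |λ - λ'|`. Hence after `k` steps the coupling is supported
within distance `λ ^ k + |λ - λ'| / (1 - λ)` of the diagonal, and letting `k → ∞` gives
`W_q(μ_λ, μ_λ') ≤ |λ - λ'| / (1 - λ)`, half the stated bound. That a stationary measure lives on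
`[0, 1]` comes from both maps contracting the distance to `[0, 1]` by the factor `λ`.
-/

lemma measure_setOf_pos_eq_zero_of_le_scaled {X : Type*} [MeasurableSpace X] {μ : Measure X}
    [IsFiniteMeasure μ] {d : X → ℝ} (hd : Measurable d) {l : ℝ} (hl0 : 0 < l) (hl1 : l < 1)
    (h : ∀ t > 0, μ {x | t < d x} ≤ μ {x | t / l < d x}) :
    μ {x | 0 < d x} = 0 := by
  have hlevel : ∀ t > 0, μ {x | t < d x} = 0 := by
    intro t ht
    have hiter : ∀ n : ℕ, μ {x | t < d x} ≤ μ {x | t / l ^ n < d x} := by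
      intro n
      induction n with
      | zero => simp
      | succ n ih =>
        refine ih.trans ((h _ (by positivity)).trans_eq ?_)
        rw [div_div, pow_succ]
    have hgrow : Tendsto (fun n : ℕ => t / l ^ n) atTop atTop := by
      simpa [div_eq_mul_inv, inv_pow] using (tendsto_pow_atTop_atTop_of_one_lt
        (one_lt_inv_iff₀.2 ⟨hl0, hl1⟩)).const_mul_atTop ht
    have hanti : Antitone fun n : ℕ => {x | t / l ^ n < d x} := fun m n hmn x hx =>
      lt_of_le_of_lt (div_le_div_of_nonneg_left ht.le (pow_pos hl0 n)
        (pow_le_pow_of_le_one hl0.le hl1.le hmn)) hx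
    have hempty : (⋂ n : ℕ, {x | t / l ^ n < d x}) = ∅ := by
      refine eq_empty_of_forall_notMem fun x hx => ?_
      obtain ⟨n, hn⟩ := (hgrow.eventually_ge_atTop (d x)).exists
      exact (mem_iInter.1 hx n).not_ge hn
    have hlim := tendsto_measure_iInter_atTop (μ := μ)
      (fun n => (measurableSet_lt measurable_const hd).nullMeasurableSet) hanti
      ⟨0, measure_ne_top μ _⟩
    rw [hempty, measure_empty] at hlim
    exact le_antisymm (ge_of_tendsto' hlim hiter) zero_le
  have hunion : {x | 0 < d x} = ⋃ n : ℕ, {x | 1 / ((n : ℝ) + 1) < d x} := by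
    ext x
    simp only [mem_ofPred_eq, mem_iUnion]
    refine ⟨fun hx => ?_, fun ⟨n, hn⟩ => lt_trans Nat.one_div_pos_of_nat hn⟩
    exact (exists_nat_one_div_lt hx).imp fun n hn => hn
  rw [hunion]
  exact measure_iUnion_null fun n => hlevel _ Nat.one_div_pos_of_nat

section Coupling

variable {α β : Type*} [MeasurableSpace α] [MeasurableSpace β]

def couplingStep (f₀ f₁ : α → α) (g₀ g₁ : β → β) (γ : Measure (α × β)) : Measure (α × β) :=
  (1/2 : ℝ≥0∞) • γ.map (Prod.map f₀ g₀) + (1/2 : ℝ≥0∞) • γ.map (Prod.map f₁ g₁)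

variable {f₀ f₁ : α → α} {g₀ g₁ : β → β} {μ : Measure α} {ν : Measure β} {γ : Measure (α × β)}

lemma isCoupling_couplingStep (hf₀ : Measurable f₀) (hf₁ : Measurable f₁)
    (hg₀ : Measurable g₀) (hg₁ : Measurable g₁)
    (hμ : μ = (1/2 : ℝ≥0∞) • μ.map f₀ + (1/2 : ℝ≥0∞) • μ.map f₁)
    (hν : ν = (1/2 : ℝ≥0∞) • ν.map g₀ + (1/2 : ℝ≥0∞) • ν.map g₁)
    (hγ : IsCoupling γ μ ν) : IsCoupling (couplingStep f₀ f₁ g₀ g₁ γ) μ ν := by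
  obtain ⟨hfst, hsnd⟩ := hγ
  constructor
  · rw [couplingStep, Measure.map_add _ _ measurable_fst, Measure.map_smul, Measure.map_smul,
      Measure.map_map measurable_fst (hf₀.prodMap hg₀),
      Measure.map_map measurable_fst (hf₁.prodMap hg₁), hμ, ← hfst,
      Measure.map_map hf₀ measurable_fst, Measure.map_map hf₁ measurable_fst]
    rfl
  · rw [couplingStep, Measure.map_add _ _ measurable_snd, Measure.map_smul, Measure.map_smul,
      Measure.map_map measurable_snd (hf₀.prodMap hg₀),
      Measure.map_map measurable_snd (hf₁.prodMap hg₁), hν, ← hsnd,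
      Measure.map_map hg₀ measurable_snd, Measure.map_map hg₁ measurable_snd]
    rfl

lemma ae_couplingStep (hf₀ : Measurable f₀) (hf₁ : Measurable f₁)
    (hg₀ : Measurable g₀) (hg₁ : Measurable g₁) {P : α × β → Prop}
    (hP : MeasurableSet {p | P p}) (h₀ : ∀ᵐ p ∂γ, P (f₀ p.1, g₀ p.2))
    (h₁ : ∀ᵐ p ∂γ, P (f₁ p.1, g₁ p.2)) : ∀ᵐ p ∂couplingStep f₀ f₁ g₀ g₁ γ, P p := by
  rw [couplingStep, ae_add_measure_iff]
  exact ⟨Measure.ae_smul_measure ((ae_map_iff (hf₀.prodMap hg₀).aemeasurable hP).2 h₀) _,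
    Measure.ae_smul_measure ((ae_map_iff (hf₁.prodMap hg₁).aemeasurable hP).2 h₁) _⟩

lemma IsCoupling.ae_fst (hγ : IsCoupling γ μ ν) {P : α → Prop} (h : ∀ᵐ x ∂μ, P x) :
    ∀ᵐ p ∂γ, P p.1 :=
  ae_of_ae_map measurable_fst.aemeasurable (hγ.1 ▸ h)

lemma IsCoupling.ae_snd (hγ : IsCoupling γ μ ν) {P : β → Prop} (h : ∀ᵐ y ∂ν, P y) :
    ∀ᵐ p ∂γ, P p.2 :=
  ae_of_ae_map measurable_snd.aemeasurable (hγ.2 ▸ h)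

lemma isCoupling_prod (μ : Measure α) (ν : Measure β) [IsProbabilityMeasure μ]
    [IsProbabilityMeasure ν] : IsCoupling (μ.prod ν) μ ν := by
  constructor
  · rw [Measure.map_fst_prod, measure_univ, one_smul]
  · rw [Measure.map_snd_prod, measure_univ, one_smul]

end Coupling

lemma wDist_le_of_ae_dist_le {X : Type*} [MetricSpace X] [MeasurableSpace X] {q D : ℝ}
    (hq : 1 ≤ q) (hD : 0 ≤ D) {μ ν : Measure X} [IsProbabilityMeasure μ]
    {γ : Measure (X × X)} (hγ : IsCoupling γ μ ν) (hdist : ∀ᵐ p ∂γ, dist p.1 p.2 ≤ D) :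
    wDist q μ ν ≤ ENNReal.ofReal D := by
  have hq0 : 0 < q := one_pos.trans_le hq
  have hγ_univ : γ univ = 1 := by
    rw [← measure_univ (μ := μ), ← hγ.1, Measure.map_apply measurable_fst MeasurableSet.univ,
      preimage_univ]
  have hcost : wCost q μ ν ≤ ENNReal.ofReal (D ^ q) :=
    calc wCost q μ ν ≤ ∫⁻ p, ENNReal.ofReal (dist p.1 p.2 ^ q) ∂γ := iInf₂_le γ hγ
      _ ≤ ∫⁻ _, ENNReal.ofReal (D ^ q) ∂γ := lintegral_mono_ae <| hdist.mono fun p hp =>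
          ENNReal.ofReal_le_ofReal (Real.rpow_le_rpow dist_nonneg hp hq0.le)
      _ = ENNReal.ofReal (D ^ q) := by rw [lintegral_const, hγ_univ, mul_one]
  calc wDist q μ ν = wCost q μ ν ^ (1 / q) := by
        rw [wDist, min_eq_right ((div_le_one hq0).2 hq)]
    _ ≤ ENNReal.ofReal (D ^ q) ^ (1 / q) := ENNReal.rpow_le_rpow hcost (by positivity)
    _ = ENNReal.ofReal D := by
        rw [ENNReal.ofReal_rpow_of_nonneg (by positivity) (by positivity), ← Real.rpow_mul hD,
          mul_one_div_cancel hq0.ne', Real.rpow_one]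

lemma abs_affine_sub_affine_le {l l' x y b D : ℝ} (hl : 0 ≤ l) (hy : y ∈ Icc (0 : ℝ) 1)
    (hb : b ∈ Icc (0 : ℝ) 1) (hxy : |x - y| ≤ D) :
    |(l * x + (1 - l) * b) - (l' * y + (1 - l') * b)| ≤ l * D + |l - l'| := by
  have hyb : |y - b| ≤ 1 := abs_sub_le_iff.2 ⟨by linarith [hy.2, hb.1], by linarith [hy.1, hb.2]⟩
  calc |(l * x + (1 - l) * b) - (l' * y + (1 - l') * b)|
      = |l * (x - y) + (l - l') * (y - b)| := by ring_nf
    _ ≤ l * |x - y| + |l - l'| * |y - b| :=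
        (abs_add_le _ _).trans_eq (by rw [abs_mul, abs_mul, abs_of_nonneg hl])
    _ ≤ l * D + |l - l'| * 1 := by gcongr
    _ = l * D + |l - l'| := by rw [mul_one]

def bernoulliCoupling (l l' : ℝ) (μ μ' : Measure ℝ) (k : ℕ) : Measure (ℝ × ℝ) :=
  (couplingStep (fun x => l * x) (fun x => l * x + (1 - l))
    (fun x => l' * x) (fun x => l' * x + (1 - l')))^[k] (μ.prod μ')

namespace BernoulliStationary

variable {l l' : ℝ} {μ μ' : Measure ℝ}

lemma measure_le_of_preimage_subset (h : BernoulliStationary l μ) {s t : Set ℝ}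
    (hs : MeasurableSet s) (h₀ : (fun x => l * x) ⁻¹' s ⊆ t)
    (h₁ : (fun x => l * x + (1 - l)) ⁻¹' s ⊆ t) : μ s ≤ μ t := by
  calc μ s = 1/2 * μ ((fun x => l * x) ⁻¹' s) + 1/2 * μ ((fun x => l * x + (1 - l)) ⁻¹' s) := by
        conv_lhs => rw [h.2]
        rw [Measure.add_apply, Measure.smul_apply, Measure.smul_apply,
          Measure.map_apply (by fun_prop) hs, Measure.map_apply (by fun_prop) hs,
          smul_eq_mul, smul_eq_mul]
    _ ≤ 1/2 * μ t + 1/2 * μ t := by gcongr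
    _ = μ t := by rw [← add_mul, one_div, ENNReal.inv_two_add_inv_two, one_mul]

lemma ae_mem_Icc (h : BernoulliStationary l μ) (hl0 : 0 < l) (hl1 : l < 1) :
    ∀ᵐ x ∂μ, x ∈ Icc (0 : ℝ) 1 := by
  have := h.1
  have hd : Measurable fun x : ℝ => max (-x) (x - 1) := by fun_prop
  have hoff : {x : ℝ | ¬ x ∈ Icc 0 1} = {x | 0 < max (-x) (x - 1)} := by
    ext x
    simp only [mem_ofPred_eq, mem_Icc, lt_max_iff, not_and_or, not_le]
    constructor <;> rintro (hx | hx) <;> first | (left; linarith) | (right; linarith)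
  rw [ae_iff, hoff]
  have hcontract : ∀ x : ℝ, max (-(l * x)) (l * x - 1) ≤ l * max (-x) (x - 1) ∧
      max (-(l * x + (1 - l))) (l * x + (1 - l) - 1) ≤ l * max (-x) (x - 1) := fun x => by
    rw [mul_max_of_nonneg _ _ hl0.le]
    constructor <;> apply max_le_max <;> linarith
  refine measure_setOf_pos_eq_zero_of_le_scaled hd hl0 hl1 fun t ht => ?_
  refine h.measure_le_of_preimage_subset (measurableSet_lt measurable_const hd) ?_ ?_ <;>
    intro x hx <;> rw [mem_preimage, mem_ofPred_eq] at hx <;> rw [mem_ofPred_eq, div_lt_iff₀ hl0]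
  · linarith [(hcontract x).1]
  · linarith [(hcontract x).2]

lemma isCoupling_bernoulliCoupling (h : BernoulliStationary l μ)
    (h' : BernoulliStationary l' μ') (k : ℕ) : IsCoupling (bernoulliCoupling l l' μ μ' k) μ μ' := by
  have := h.1
  have := h'.1
  induction k with
  | zero => exact isCoupling_prod μ μ'
  | succ k ih =>
    rw [bernoulliCoupling, Function.iterate_succ_apply']
    exact isCoupling_couplingStep (by fun_prop) (by fun_prop) (by fun_prop) (by fun_prop)
      h.2 h'.2 ih

lemma ae_abs_sub_le_bernoulliCoupling (h : BernoulliStationary l μ)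
    (h' : BernoulliStationary l' μ') (hl : l ∈ Ioo (0 : ℝ) 1) (hl' : l' ∈ Ioo (0 : ℝ) 1)
    (k : ℕ) : ∀ᵐ p ∂bernoulliCoupling l l' μ μ' k, |p.1 - p.2| ≤ l ^ k + |l - l'| / (1 - l) := by
  have hδ : 0 ≤ |l - l'| / (1 - l) := div_nonneg (abs_nonneg _) (by linarith [hl.2])
  have hsupp' : ∀ k, ∀ᵐ p ∂bernoulliCoupling l l' μ μ' k, p.2 ∈ Icc (0 : ℝ) 1 := fun k =>
    (h.isCoupling_bernoulliCoupling h' k).ae_snd (h'.ae_mem_Icc hl'.1 hl'.2)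
  induction k with
  | zero =>
    filter_upwards [(h.isCoupling_bernoulliCoupling h' 0).ae_fst (h.ae_mem_Icc hl.1 hl.2),
      hsupp' 0] with p hx hy
    rw [pow_zero]
    exact (abs_sub_le_iff.2 ⟨by linarith [hx.2, hy.1], by linarith [hx.1, hy.2]⟩).trans
      (le_add_of_nonneg_right hδ)
  | succ k ih =>
    -- `|l - l'| / (1 - l)` is the fixed point of `D ↦ l * D + |l - l'|`
    have hrec : l * (l ^ k + |l - l'| / (1 - l)) + |l - l'| =
        l ^ (k + 1) + |l - l'| / (1 - l) := by
      field_simp [show 1 - l ≠ 0 by linarith [hl.2]]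
      ring
    rw [bernoulliCoupling, Function.iterate_succ_apply', ← hrec]
    refine ae_couplingStep (by fun_prop) (by fun_prop) (by fun_prop) (by fun_prop)
      (measurableSet_le (by fun_prop) measurable_const) ?_ ?_ <;>
    filter_upwards [ih, hsupp' k] with p hxy hy
    · simpa using abs_affine_sub_affine_le (l' := l') (b := 0) hl.1.le hy (by simp) hxy
    · simpa using abs_affine_sub_affine_le (l' := l') (b := 1) hl.1.le hy (by simp) hxy

lemma wDist_le (h : BernoulliStationary l μ) (h' : BernoulliStationary l' μ')
    (hl : l ∈ Ioo (0 : ℝ) 1) (hl' : l' ∈ Ioo (0 : ℝ) 1) {q : ℝ} (hq : 1 ≤ q) :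
    wDist q μ μ' ≤ ENNReal.ofReal (|l - l'| / (1 - l)) := by
  have := h.1
  have hδ : 0 ≤ |l - l'| / (1 - l) := div_nonneg (abs_nonneg _) (by linarith [hl.2])
  have hbound : ∀ k : ℕ, wDist q μ μ' ≤ ENNReal.ofReal (l ^ k + |l - l'| / (1 - l)) := fun k =>
    wDist_le_of_ae_dist_le hq (add_nonneg (pow_nonneg hl.1.le k) hδ)
      (h.isCoupling_bernoulliCoupling h' k)
      (by simpa only [Real.dist_eq] using h.ae_abs_sub_le_bernoulliCoupling h' hl hl' k)
  have hlim : Tendsto (fun k : ℕ => ENNReal.ofReal (l ^ k + |l - l'| / (1 - l))) atTop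
      (𝓝 (ENNReal.ofReal (|l - l'| / (1 - l)))) := by
    simpa using ENNReal.tendsto_ofReal
      ((tendsto_pow_atTop_nhds_zero_of_lt_one hl.1.le hl.2).add_const (|l - l'| / (1 - l)))
  exact ge_of_tendsto' hlim hbound

end BernoulliStationary

/-- **Proposition (Lipschitz dependence of Bernoulli convolutions).**
For all `q ≥ 1` and `λ, λ' ∈ (0,1)`, `W_q(μ_λ, μ_{λ'}) ≤ (2/(1-λ))·|λ-λ'|`;
in particular `λ ↦ μ_λ` is Lipschitz in `W_q` on each interval `[0, 1-ε]`, `ε > 0`. -/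
theorem stmt15 (μB : ℝ → Measure ℝ)
    (hμ : ∀ l ∈ Set.Ioo (0:ℝ) 1, BernoulliStationary l (μB l)) :
    (∀ q : ℝ, 1 ≤ q → ∀ l ∈ Set.Ioo (0:ℝ) 1, ∀ l' ∈ Set.Ioo (0:ℝ) 1,
      wDist q (μB l) (μB l') ≤ ENNReal.ofReal ((2 / (1 - l)) * |l - l'|)) ∧
    (∀ ε : ℝ, 0 < ε → ∀ q : ℝ, 1 ≤ q →
      ∀ l ∈ Set.Ioo (0:ℝ) 1, ∀ l' ∈ Set.Ioo (0:ℝ) 1, l ≤ 1 - ε → l' ≤ 1 - ε →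
        wDist q (μB l) (μB l') ≤ ENNReal.ofReal ((2 / ε) * |l - l'|)) := by
  have hW : ∀ q : ℝ, 1 ≤ q → ∀ l ∈ Ioo (0:ℝ) 1, ∀ l' ∈ Ioo (0:ℝ) 1,
      wDist q (μB l) (μB l') ≤ ENNReal.ofReal (|l - l'| / (1 - l)) := fun q hq l hl l' hl' =>
    (hμ l hl).wDist_le (hμ l' hl') hl hl' hq
  refine ⟨fun q hq l hl l' hl' => (hW q hq l hl l' hl').trans (ENNReal.ofReal_le_ofReal ?_),
    fun ε hε q hq l hl l' hl' hle _ => (hW q hq l hl l' hl').trans (ENNReal.ofReal_le_ofReal ?_)⟩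
  · rw [div_mul_eq_mul_div]
    exact div_le_div_of_nonneg_right (by linarith [abs_nonneg (l - l')]) (by linarith [hl.2])
  · calc |l - l'| / (1 - l) ≤ |l - l'| / ε :=
          div_le_div_of_nonneg_left (abs_nonneg _) hε (by linarith)
      _ ≤ 2 / ε * |l - l'| := by
          rw [div_mul_eq_mul_div]
          exact div_le_div_of_nonneg_right (by linarith [abs_nonneg (l - l')]) hε.le

end
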